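/- arXiv:1310.1998 — 5 statements merged into one kernel-verified Lean document; each statement's English description precedes it below -/
import Mathlib

section
/- For every prime number p, the sum ∑_{k=1}^∞ p^{min(2k−2, 20k/11) − 2k} is at most 20 · p^{−2}. (Here the exponent min(2k−2, 20k/11) − 2k is a rational number and p raised to it is the real power.) -/
/-!
The exponent `min(2k-2, 20k/11) - 2k` equals `-2 - (2/11)(k-11)⁺`, so with `r = p^(-2/11)` the
`k`-th term is `p⁻² r^((k-11)⁺)`: ten terms equal to `p⁻²`, followed by a geometric series.
The sum is therefore `p⁻² (10 + 1/(1-r))`, and `r ≤ 9/10` because `r¹¹ = p⁻² ≤ 1/4 < (9/10)¹¹`.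
-/

theorem min_exponent_sub_eq (n : ℕ) :
    min (2 * ((n : ℝ) + 1) - 2) (20 * ((n : ℝ) + 1) / 11) - 2 * ((n : ℝ) + 1)
      = -2 + (-2 / 11) * ((n - 10 : ℕ) : ℝ) := by
  rcases le_or_gt n 10 with hn | hn
  · have hn' : (n : ℝ) ≤ 10 := by exact_mod_cast hn
    rw [Nat.sub_eq_zero_of_le hn, min_eq_left (by linarith)]
    push_cast
    ring
  · have hn' : (10 : ℝ) ≤ n := by exact_mod_cast hn.le
    rw [Nat.cast_sub hn.le, min_eq_right (by linarith)]
    push_cast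
    ring

theorem rpow_min_exponent_eq {x : ℝ} (hx : 0 < x) (n : ℕ) :
    x ^ (min (2 * ((n : ℝ) + 1) - 2) (20 * ((n : ℝ) + 1) / 11) - 2 * ((n : ℝ) + 1))
      = x ^ (-2 : ℝ) * (x ^ (-2 / 11 : ℝ)) ^ (n - 10) := by
  rw [min_exponent_sub_eq, Real.rpow_add hx, Real.rpow_mul hx.le, Real.rpow_natCast]

theorem hasSum_pow_tsub {r : ℝ} (hr₀ : 0 ≤ r) (hr₁ : r < 1) (m : ℕ) :
    HasSum (fun n : ℕ => r ^ (n - m)) (m + (1 - r)⁻¹) := by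
  rw [← hasSum_nat_add_iff' m]
  have head : ∑ i ∈ Finset.range m, r ^ (i - m) = m := by
    rw [Finset.sum_congr rfl fun i hi => by rw [Nat.sub_eq_zero_of_le (Finset.mem_range.1 hi).le]]
    simp
  simpa [head] using hasSum_geometric_of_lt_one hr₀ hr₁

theorem rpow_neg_two_div_eleven_le {x : ℝ} (hx : 2 ≤ x) : x ^ (-2 / 11 : ℝ) ≤ 9 / 10 := by
  have hx₀ : 0 < x := by linarith
  refine le_of_pow_le_pow_left₀ (n := 11) (by norm_num) (by norm_num) ?_
  have h_pow : (x ^ (-2 / 11 : ℝ)) ^ 11 = (x ^ 2)⁻¹ := by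
    rw [← Real.rpow_natCast, ← Real.rpow_mul hx₀.le]
    norm_num [Real.rpow_neg hx₀.le]
  rw [h_pow]
  calc (x ^ 2)⁻¹ ≤ (2 ^ 2)⁻¹ := by gcongr
    _ ≤ (9 / 10) ^ 11 := by norm_num

/-- For every prime `p`, the series
`∑_{k=1}^∞ p^(min(2k−2, 20k/11) − 2k)` converges and its sum is at most `20 · p⁻²`.
The sum over `k ≥ 1` is written as a `tsum` over `n : ℕ` with `k = n + 1`. -/
theorem sum_min_exponent_le (p : ℕ) (hp : p.Prime) :
    (Summable fun n : ℕ =>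
      (p : ℝ) ^ (min (2 * ((n : ℝ) + 1) - 2) (20 * ((n : ℝ) + 1) / 11) - 2 * ((n : ℝ) + 1))) ∧
    (∑' n : ℕ,
      (p : ℝ) ^ (min (2 * ((n : ℝ) + 1) - 2) (20 * ((n : ℝ) + 1) / 11) - 2 * ((n : ℝ) + 1)))
      ≤ 20 * (p : ℝ) ^ (-2 : ℝ) := by
  have hp₂ : (2 : ℝ) ≤ p := by exact_mod_cast hp.two_le
  have hp₀ : (0 : ℝ) < p := by linarith
  set r : ℝ := (p : ℝ) ^ (-2 / 11 : ℝ)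
  have hr : r ≤ 9 / 10 := rpow_neg_two_div_eleven_le hp₂
  have h_sum : HasSum
      (fun n : ℕ => (p : ℝ) ^ (min (2 * ((n : ℝ) + 1) - 2) (20 * ((n : ℝ) + 1) / 11)
        - 2 * ((n : ℝ) + 1)))
      ((p : ℝ) ^ (-2 : ℝ) * (10 + (1 - r)⁻¹)) := by
    simp only [rpow_min_exponent_eq hp₀]
    have h_geom := (hasSum_pow_tsub (Real.rpow_nonneg hp₀.le _) (by linarith) 10).mul_left
      ((p : ℝ) ^ (-2 : ℝ))
    rwa [Nat.cast_ofNat] at h_geom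
  refine ⟨h_sum.summable, h_sum.tsum_eq.le.trans ?_⟩
  have h_inv : (1 - r)⁻¹ ≤ 10 := by
    rw [inv_le_comm₀ (by linarith) (by norm_num)]
    linarith
  rw [mul_comm 20]
  gcongr
  linarith
end

section
/- For every ε > 0 there exists a constant C_ε > 0 such that for every squarefree positive integer d, ∏_{p | d} (∑_{k=1}^∞ p^{min(2k−2, 20k/11) − 2k}) ≤ C_ε · d^{−2 + ε}, where the product is over the prime divisors p of d. -/
/-!
Since `min (2k - 2) (20k/11) - 2k = -2 + min 0 ((20 - 2(k-1))/11)`, the `k`-th term of the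
Euler factor at `p ≥ 2` is at most `p⁻² · 2^(20/11) · (2^(-2/11))^(k-1)`, so the factor is
`O(p⁻²)` by comparison with a geometric series. A bound `A p⁻²` at primes becomes
`p^(-2+ε)` once `p^ε ≥ A`, and the finitely many smaller primes contribute a constant.
-/

open Real

noncomputable def eulerFactor (x : ℝ) : ℝ :=
  ∑' n : ℕ, x ^ (min (2 * ((n : ℝ) + 1) - 2) (20 * ((n : ℝ) + 1) / 11) - 2 * ((n : ℝ) + 1))

lemma eulerFactor_nonneg {x : ℝ} (hx : 0 ≤ x) : 0 ≤ eulerFactor x :=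
  tsum_nonneg fun _ => rpow_nonneg hx _

lemma eulerFactor_term_le {x : ℝ} (hx : 2 ≤ x) (n : ℕ) :
    x ^ (min (2 * ((n : ℝ) + 1) - 2) (20 * ((n : ℝ) + 1) / 11) - 2 * ((n : ℝ) + 1))
      ≤ x ^ (-2 : ℝ) * 2 ^ ((20 : ℝ) / 11) * ((2 : ℝ) ^ (-(2 : ℝ) / 11)) ^ n := by
  set e := min (2 * ((n : ℝ) + 1) - 2) (20 * ((n : ℝ) + 1) / 11) - 2 * ((n : ℝ) + 1)
  have hx0 : 0 < x := by linarith
  have he_nonpos : e + 2 ≤ 0 := by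
    have := min_le_left (2 * ((n : ℝ) + 1) - 2) (20 * ((n : ℝ) + 1) / 11); linarith
  have he_decay : e + 2 ≤ 20 / 11 + n * (-2 / 11) := by
    have := min_le_right (2 * ((n : ℝ) + 1) - 2) (20 * ((n : ℝ) + 1) / 11); linarith
  have h2pow : (2 : ℝ) ^ (20 / 11 + n * (-2 / 11) : ℝ)
      = 2 ^ ((20 : ℝ) / 11) * ((2 : ℝ) ^ (-(2 : ℝ) / 11)) ^ n := by
    rw [rpow_add two_pos, mul_comm (n : ℝ), rpow_mul zero_le_two, rpow_natCast, neg_div]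
  calc x ^ e = x ^ (-2 : ℝ) * x ^ (e + 2) := by rw [← rpow_add hx0]; ring_nf
    _ ≤ x ^ (-2 : ℝ) * 2 ^ (e + 2) := by
        gcongr x ^ (-2 : ℝ) * ?_; exact rpow_le_rpow_of_nonpos two_pos hx he_nonpos
    _ ≤ x ^ (-2 : ℝ) * 2 ^ (20 / 11 + n * (-2 / 11) : ℝ) := by
        gcongr; exact one_le_two
    _ = _ := by rw [h2pow, mul_assoc]

lemma eulerFactor_le {x : ℝ} (hx : 2 ≤ x) :
    eulerFactor x ≤ (2 ^ ((20 : ℝ) / 11) * (1 - (2 : ℝ) ^ (-(2 : ℝ) / 11))⁻¹) * x ^ (-2 : ℝ) := by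
  set q : ℝ := (2 : ℝ) ^ (-(2 : ℝ) / 11)
  have hq0 : 0 ≤ q := rpow_nonneg zero_le_two _
  have hq1 : q < 1 := rpow_lt_one_of_one_lt_of_neg one_lt_two (by norm_num)
  have hgeom : Summable fun n : ℕ => x ^ (-2 : ℝ) * 2 ^ ((20 : ℝ) / 11) * q ^ n :=
    (summable_geometric_of_lt_one hq0 hq1).mul_left _
  calc eulerFactor x ≤ ∑' n : ℕ, x ^ (-2 : ℝ) * 2 ^ ((20 : ℝ) / 11) * q ^ n :=
        Summable.tsum_le_tsum (eulerFactor_term_le hx)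
          (hgeom.of_nonneg_of_le (fun _ => rpow_nonneg (by linarith) _) (eulerFactor_term_le hx))
          hgeom
    _ = _ := by rw [tsum_mul_left, tsum_geometric_of_lt_one hq0 hq1]; ring

lemma Finset.prod_ite_lt_le_pow {s : Finset ℕ} {B : ℝ} (hB : 1 ≤ B) (P : ℕ) :
    ∏ p ∈ s, (if p < P then B else 1) ≤ B ^ P := by
  rw [← Finset.prod_filter, Finset.prod_const]
  refine pow_le_pow_right₀ hB ((Finset.card_le_card fun p hp => ?_).trans_eq (Finset.card_range P))
  exact Finset.mem_range.mpr (Finset.mem_filter.mp hp).2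

lemma Nat.prod_primeFactors_rpow_of_squarefree {d : ℕ} (hd : Squarefree d) (r : ℝ) :
    ∏ p ∈ d.primeFactors, (p : ℝ) ^ r = (d : ℝ) ^ r := by
  rw [finsetProd_rpow _ _ fun p _ => p.cast_nonneg, ← Nat.cast_prod,
    Nat.prod_primeFactors_of_squarefree hd]

theorem exists_prod_primeFactors_le_mul_rpow {f : ℕ → ℝ} {A a ε : ℝ} (hε : 0 < ε)
    (hf : ∀ p, p.Prime → 0 ≤ f p ∧ f p ≤ A * (p : ℝ) ^ (-a)) :
    ∃ C, 0 < C ∧ ∀ d : ℕ, Squarefree d →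
      ∏ p ∈ d.primeFactors, f p ≤ C * (d : ℝ) ^ (-a + ε) := by
  obtain ⟨P, hP⟩ := Filter.eventually_atTop.mp
    (((tendsto_rpow_atTop hε).comp tendsto_natCast_atTop_atTop).eventually_ge_atTop A)
  set B := max A 1
  have hB : 1 ≤ B := le_max_right _ _
  have hlocal : ∀ p, p.Prime → f p ≤ (if p < P then B else 1) * (p : ℝ) ^ (-a + ε) := by
    intro p hp
    have hp1 : (1 : ℝ) ≤ p := by exact_mod_cast hp.one_lt.le
    have hfp := (hf p hp).2
    split_ifs with hpP
    · calc f p ≤ A * (p : ℝ) ^ (-a) := hfp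
        _ ≤ B * (p : ℝ) ^ (-a + ε) := by
          gcongr
          · exact le_max_left _ _
          · linarith
    · calc f p ≤ (p : ℝ) ^ ε * (p : ℝ) ^ (-a) := by
            refine hfp.trans ?_
            gcongr
            exact hP p (not_lt.mp hpP)
        _ = 1 * (p : ℝ) ^ (-a + ε) := by rw [← rpow_add (by linarith), one_mul, add_comm]
  refine ⟨B ^ P, pow_pos (zero_lt_one.trans_le hB) P, fun d hd => ?_⟩
  calc ∏ p ∈ d.primeFactors, f p
      ≤ ∏ p ∈ d.primeFactors, (if p < P then B else 1) * (p : ℝ) ^ (-a + ε) :=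
        Finset.prod_le_prod (fun p hp => (hf p (Nat.prime_of_mem_primeFactors hp)).1)
          fun p hp => hlocal p (Nat.prime_of_mem_primeFactors hp)
    _ ≤ B ^ P * (d : ℝ) ^ (-a + ε) := by
        rw [Finset.prod_mul_distrib, Nat.prod_primeFactors_rpow_of_squarefree hd]
        gcongr
        exact Finset.prod_ite_lt_le_pow hB P

/-- For every `ε > 0` there exists `C_ε > 0` such that for every
squarefree positive integer `d`,
`∏_{p ∣ d} (∑_{k=1}^∞ p^(min(2k−2, 20k/11) − 2k)) ≤ C_ε · d^(−2+ε)`,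
the product being over the prime divisors `p` of `d`. -/
theorem prod_over_prime_divisors_le :
    ∀ ε : ℝ, 0 < ε → ∃ C : ℝ, 0 < C ∧ ∀ d : ℕ, Squarefree d →
      (∏ p ∈ d.primeFactors,
        ∑' n : ℕ,
          (p : ℝ) ^ (min (2 * ((n : ℝ) + 1) - 2) (20 * ((n : ℝ) + 1) / 11) - 2 * ((n : ℝ) + 1)))
        ≤ C * (d : ℝ) ^ (-2 + ε) := fun _ hε =>
  exists_prod_primeFactors_le_mul_rpow (f := fun p => eulerFactor p) hε fun p hp =>
    ⟨eulerFactor_nonneg p.cast_nonneg, eulerFactor_le (by exact_mod_cast hp.two_le)⟩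
end

section
/- Let g be a real-valued function on the prime numbers with 0 < g(p) < 1 for every prime p and g(p) → 1/5 as p → ∞, and for squarefree d ≥ 1 set h_d = ∏_{p | d} g(p)/(1 − g(p)). For z ≥ 2 let P(z) = ∏_{p < z} p. Then for every ε > 0 there exist constants c_ε, C_ε > 0 and D_0 ≥ 1 such that for all real D ≥ D_0 and all z ≥ √D: c_ε · D^{1/2 − ε} ≤ ∑_{d < √D, d | P(z)} h_d ≤ C_ε · D^{1/2 + ε}, where the sum is over positive (necessarily squarefree) divisors d of P(z) with d < √D. -/
/-- `P z = ∏_{p < z} p`, the product of all primes (in `ℕ`) less than the real number `z`.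
For a natural number `p`, `p < z` is equivalent to `p < ⌈z⌉₊` (for `z ≥ 0`). -/
noncomputable def primesProdBelow (z : ℝ) : ℕ :=
  ∏ p ∈ (Finset.range ⌈z⌉₊).filter Nat.Prime, p

/-! Since `h_p → 1/4`, the weights `h_p` are bounded below by some `δ > 0` on all primes and
exceed `1` at only finitely many primes, so every `h_d` is at most a constant `C`; the sum is then
at most `C` times its number of terms, which is below `√D + 1`. For the lower bound keep only the
terms `d = p` prime, `p < √D`: they divide `P(z)` because `z ≥ √D`, each contributes at least `δ`,
and by Chebyshev there are `≫ √D / log √D ≥ D ^ (1/2 - ε)` of them. -/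

open Filter Finset Real
open scoped Nat.Prime Topology

lemma exists_pos_forall_prime_le {f : ℕ → ℝ} {c : ℝ} (hc : 0 < c)
    (hpos : ∀ p, p.Prime → 0 < f p) (hf : ∀ᶠ p in atTop ⊓ 𝓟 {p | p.Prime}, c ≤ f p) :
    ∃ δ > 0, ∀ p, p.Prime → δ ≤ f p := by
  obtain ⟨N, hN⟩ := (eventually_inf_principal.1 hf).exists_forall_of_atTop
  have hsmall : ∀ᶠ δ in 𝓝[>] (0 : ℝ), δ ≤ c ∧ ∀ p ∈ (range N).filter Nat.Prime, δ ≤ f p :=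
    nhdsWithin_le_nhds <| (eventually_le_nhds hc).and <|
      (eventually_all_finset _).2 fun p hp => eventually_le_nhds (hpos p (mem_filter.1 hp).2)
  obtain ⟨δ, ⟨hδc, hδN⟩, hδ⟩ := (hsmall.and self_mem_nhdsWithin).exists
  refine ⟨δ, hδ, fun p hp => ?_⟩
  rcases lt_or_ge p N with h | h
  · exact hδN p (mem_filter.2 ⟨mem_range.2 h, hp⟩)
  · exact hδc.trans (hN p h hp)

lemma exists_forall_prod_primeFactors_le {f : ℕ → ℝ} (hf0 : ∀ p, p.Prime → 0 ≤ f p)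
    (hf : ∀ᶠ p in atTop ⊓ 𝓟 {p | p.Prime}, f p ≤ 1) :
    ∃ C, ∀ d : ℕ, ∏ p ∈ d.primeFactors, f p ≤ C := by
  obtain ⟨N, hN⟩ := (eventually_inf_principal.1 hf).exists_forall_of_atTop
  refine ⟨∏ p ∈ range N, max 1 (f p), fun d => ?_⟩
  calc ∏ p ∈ d.primeFactors, f p
      ≤ ∏ p ∈ d.primeFactors, if p < N then max 1 (f p) else 1 := by
        refine prod_le_prod (fun p hp => hf0 p (Nat.prime_of_mem_primeFactors hp)) fun p hp => ?_
        split_ifs with h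
        · exact le_max_right _ _
        · exact hN p (not_lt.1 h) (Nat.prime_of_mem_primeFactors hp)
    _ = ∏ p ∈ d.primeFactors.filter (· < N), max 1 (f p) := (prod_filter _ _).symm
    _ ≤ ∏ p ∈ range N, max 1 (f p) :=
        prod_le_prod_of_subset_of_one_le (fun p hp => mem_range.2 (mem_filter.1 hp).2)
          (fun _ _ => zero_le_one.trans (le_max_left _ _)) fun _ _ _ => le_max_left _ _

lemma primeCounting_floor_le_primeCounting'_ceil_add_one (x : ℝ) :
    π ⌊x⌋₊ ≤ π' ⌈x⌉₊ + 1 := by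
  calc π ⌊x⌋₊ ≤ π ⌈x⌉₊ := Nat.monotone_primeCounting (Nat.floor_le_ceil x)
    _ = π' ⌈x⌉₊ + if ⌈x⌉₊.Prime then 1 else 0 := Nat.count_succ _ _
    _ ≤ π' ⌈x⌉₊ + 1 := by gcongr; split_ifs <;> omega

lemma eventually_rpow_le_primeCounting'_ceil {a : ℝ} (ha : a < 1) :
    ∀ᶠ x : ℝ in atTop, x ^ a ≤ π' ⌈x⌉₊ := by
  set b := max a (1 / 2)
  have hb : b < 1 := max_lt ha (by norm_num)
  have hlog2 : 0 < log 2 := log_pos one_lt_two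
  have hlog_shift : ∀ᶠ x in atTop, log (x + 2) ≤ log 2 / 8 * (x + 2) := by
    have := (isLittleO_log_id_atTop.comp_tendsto
      (tendsto_atTop_add_const_right _ 2 tendsto_id)).def (by positivity : 0 < log 2 / 8)
    filter_upwards [this, eventually_ge_atTop 0] with x hx hx0
    simpa [abs_of_nonneg (by linarith : 0 ≤ x + 2)] using (le_abs_self _).trans hx
  have hlog_rpow : ∀ᶠ x in atTop, log x ≤ log 2 / 8 * x ^ (1 - b) := by
    filter_upwards [(isLittleO_log_rpow_atTop (sub_pos.2 hb)).def
      (by positivity : 0 < log 2 / 8), eventually_ge_atTop 0] with x hx hx0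
    simpa [abs_of_nonneg (rpow_nonneg hx0 _)] using (le_abs_self _).trans hx
  filter_upwards [hlog_shift, hlog_rpow, eventually_ge_atTop 2] with x hshift hrpow hx
  have hlogx : 0 < log x := log_pos (by linarith)
  have hxb : x ^ b * x ^ (1 - b) = x := by
    rw [← rpow_add (by linarith), add_sub_cancel, rpow_one]
  suffices x ^ a + 1 ≤ π ⌊x⌋₊ by
    have := primeCounting_floor_le_primeCounting'_ceil_add_one x
    have : (π ⌊x⌋₊ : ℝ) ≤ π' ⌈x⌉₊ + 1 := by exact_mod_cast this
    linarith
  calc x ^ a + 1 ≤ 2 * x ^ b := by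
        have h1 : x ^ a ≤ x ^ b := rpow_le_rpow_of_exponent_le (by linarith) (le_max_left _ _)
        have h2 : 1 ≤ x ^ b := one_le_rpow (by linarith) (by positivity)
        linarith
    _ ≤ x * log 2 / 4 / log x := by
        rw [le_div_iff₀ hlogx]
        nlinarith [rpow_nonneg (by linarith : (0:ℝ) ≤ x) b]
    _ ≤ ((x - 1) * log 2 - log (x + 2)) / log x := by
        gcongr
        nlinarith
    _ ≤ π ⌊x⌋₊ := Chebyshev.pi_ge' (by linarith)

lemma sum_divisors_lt_prod_primeFactors_le {f : ℕ → ℝ} {C x : ℝ}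
    (hC : ∀ d : ℕ, ∏ p ∈ d.primeFactors, f p ≤ C) (hx : 0 ≤ x) (n : ℕ) :
    ∑ d ∈ n.divisors.filter (fun d : ℕ => (d : ℝ) < x), ∏ p ∈ d.primeFactors, f p
      ≤ C * (x + 1) := by
  have hC0 : 0 ≤ C := zero_le_one.trans (by simpa using hC 1)
  have hcard : #(n.divisors.filter (fun d : ℕ => (d : ℝ) < x)) ≤ ⌈x⌉₊ :=
    (card_le_card fun d hd => mem_range.2 (Nat.lt_ceil.2 (mem_filter.1 hd).2)).trans
      (card_range _).le
  calc _ ≤ #(n.divisors.filter (fun d : ℕ => (d : ℝ) < x)) • C :=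
        sum_le_card_nsmul _ _ _ fun d _ => hC d
    _ ≤ ⌈x⌉₊ * C := by rw [nsmul_eq_mul]; gcongr
    _ ≤ C * (x + 1) := by rw [mul_comm]; gcongr; exact (Nat.ceil_lt_add_one hx).le

lemma mul_primeCounting'_ceil_le_sum_divisors_primesProdBelow {f : ℕ → ℝ} {δ x z : ℝ}
    (hδ : 0 ≤ δ) (hf : ∀ p, p.Prime → δ ≤ f p) (hxz : x ≤ z) :
    δ * π' ⌈x⌉₊ ≤ ∑ d ∈ (primesProdBelow z).divisors.filter (fun d : ℕ => (d : ℝ) < x),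
      ∏ p ∈ d.primeFactors, f p := by
  have hP : primesProdBelow z ≠ 0 :=
    prod_ne_zero_iff.2 fun p hp => (mem_filter.1 hp).2.ne_zero
  have hsub : (range ⌈x⌉₊).filter Nat.Prime ⊆
      (primesProdBelow z).divisors.filter (fun d : ℕ => (d : ℝ) < x) := by
    intro p hp
    obtain ⟨hp_range, hp⟩ := mem_filter.1 hp
    have hpx : (p : ℝ) < x := Nat.lt_ceil.1 (mem_range.1 hp_range)
    have hpz : p ∈ range ⌈z⌉₊ := mem_range.2 (Nat.lt_ceil.2 (hpx.trans_le hxz))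
    exact mem_filter.2 ⟨Nat.mem_divisors.2 ⟨dvd_prod_of_mem _ (mem_filter.2 ⟨hpz, hp⟩), hP⟩, hpx⟩
  calc δ * π' ⌈x⌉₊ = ∑ p ∈ (range ⌈x⌉₊).filter Nat.Prime, δ := by
        rw [sum_const, nsmul_eq_mul, mul_comm, Nat.primeCounting', Nat.count_eq_card_filter_range]
    _ ≤ ∑ p ∈ (range ⌈x⌉₊).filter Nat.Prime, ∏ q ∈ p.primeFactors, f q :=
        sum_le_sum fun p hp => by
          obtain ⟨-, hp⟩ := mem_filter.1 hp
          simpa [hp.primeFactors] using hf p hp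
    _ ≤ _ := sum_le_sum_of_subset_of_nonneg hsub fun d _ _ =>
        prod_nonneg fun q hq => hδ.trans (hf q (Nat.prime_of_mem_primeFactors hq))

open scoped Classical in
/-- Let `g` be a real-valued function on the primes with `0 < g p < 1`
and `g p → 1/5` as `p → ∞` along the primes; for squarefree `d ≥ 1` let
`h_d = ∏_{p ∣ d} g p / (1 − g p)`, and for `z ≥ 2` let `P(z) = ∏_{p < z} p`.
Then for every `ε > 0` there are constants `c_ε, C_ε > 0` and `D₀ ≥ 1` such that for all
real `D ≥ D₀` and all `z ≥ √D`:
`c_ε · D^(1/2−ε) ≤ ∑_{d < √D, d ∣ P(z)} h_d ≤ C_ε · D^(1/2+ε)`. -/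
theorem sum_hd_asymptotics (g : ℕ → ℝ)
    (hg : ∀ p : ℕ, p.Prime → 0 < g p ∧ g p < 1)
    (hlim : Filter.Tendsto g (Filter.atTop ⊓ Filter.principal {p : ℕ | p.Prime})
      (nhds (1 / 5))) :
    ∀ ε : ℝ, 0 < ε → ∃ c C D₀ : ℝ, 0 < c ∧ 0 < C ∧ 1 ≤ D₀ ∧
      ∀ D z : ℝ, D₀ ≤ D → Real.sqrt D ≤ z →
        c * D ^ ((1 : ℝ) / 2 - ε) ≤
          (∑ d ∈ (primesProdBelow z).divisors.filter (fun d : ℕ => (d : ℝ) < Real.sqrt D),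
            ∏ p ∈ d.primeFactors, g p / (1 - g p)) ∧
        (∑ d ∈ (primesProdBelow z).divisors.filter (fun d : ℕ => (d : ℝ) < Real.sqrt D),
            ∏ p ∈ d.primeFactors, g p / (1 - g p)) ≤ C * D ^ ((1 : ℝ) / 2 + ε) := by
  intro ε hε
  have hpos : ∀ p, p.Prime → 0 < g p / (1 - g p) := fun p hp =>
    div_pos (hg p hp).1 (sub_pos.2 (hg p hp).2)
  have hquarter :
      Tendsto (fun p => g p / (1 - g p)) (atTop ⊓ 𝓟 {p | p.Prime}) (𝓝 (1 / 4)) := by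
    have := hlim.div (tendsto_const_nhds.sub hlim) (by norm_num : (1 : ℝ) - 1 / 5 ≠ 0)
    rwa [show (1 / 5 : ℝ) / (1 - 1 / 5) = 1 / 4 by norm_num] at this
  obtain ⟨δ, hδ, hδle⟩ := exists_pos_forall_prime_le (by norm_num : (0:ℝ) < 1 / 8) hpos
    (hquarter.eventually (eventually_ge_nhds (by norm_num)))
  obtain ⟨C, hC⟩ := exists_forall_prod_primeFactors_le (fun p hp => (hpos p hp).le)
    (hquarter.eventually (eventually_le_nhds (by norm_num)))
  have hC0 : 0 < C := zero_lt_one.trans_le (by simpa using hC 1)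
  obtain ⟨X, hX⟩ :=
    (eventually_rpow_le_primeCounting'_ceil (by linarith : 1 - 2 * ε < 1)).exists_forall_of_atTop
  refine ⟨δ, 2 * C, max 1 (X ^ 2), hδ, by positivity, le_max_left _ _, fun D z hD hz => ?_⟩
  have hD1 : 1 ≤ D := (le_max_left _ _).trans hD
  have hx1 : 1 ≤ √D := one_le_sqrt.2 hD1
  have hXx : X ≤ √D := (le_abs_self X).trans (abs_le_sqrt ((le_max_right _ _).trans hD))
  have hsqrt_rpow : ∀ s : ℝ, √D ^ (2 * s) = D ^ s := fun s => by
    rw [sqrt_eq_rpow, ← rpow_mul (by linarith)]; ring_nf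
  constructor
  · calc δ * D ^ ((1 : ℝ) / 2 - ε)
        = δ * √D ^ (1 - 2 * ε) := by rw [← hsqrt_rpow]; ring_nf
      _ ≤ δ * π' ⌈√D⌉₊ := by gcongr; exact hX _ hXx
      _ ≤ _ := mul_primeCounting'_ceil_le_sum_divisors_primesProdBelow hδ.le hδle hz
  · calc _ ≤ C * (√D + 1) := sum_divisors_lt_prod_primeFactors_le hC (by positivity) _
      _ ≤ 2 * C * √D := by nlinarith
      _ = 2 * C * D ^ ((1 : ℝ) / 2) := by rw [← hsqrt_rpow]; norm_num
      _ ≤ 2 * C * D ^ ((1 : ℝ) / 2 + ε) := by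
        gcongr
        linarith
end

section
/- Let X ≥ 2 and z ≥ X^{1/200} be real numbers, and let P = ∏_{p < z} p. Let g : ℕ → ℝ satisfy g(1) = 1, g(de) = g(d)g(e) whenever d and e are coprime divisors of P, and 1/6 ≤ g(p) ≤ 1/4 for every prime p < z. Let (a_n)_{n ≥ 1} be nonnegative real numbers with a_n = 0 unless n divides P. Suppose that for every positive divisor d of P, |∑_{n ≡ 0 (mod d)} a_n − g(d)·X| ≤ d · g(d) · X^{39/40}. Then for every ε > 0 there is a constant C_ε > 0, independent of X, z, g, and (a_n), such that a_1 ≤ C_ε · X^{199/200 + ε}. -/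
/-!
The argument is Turán's variance sieve. With `ω n` the number of primes `p ≤ y` dividing `n`
(where `y = X^(1/200) / 2 < z`) and `m = ∑_{p ≤ y} g p`, positivity gives
`a 1 * m² ≤ ∑ₙ aₙ (ω n - m)²`. Expanding the square, each of `∑ aₙ ω(n)²`, `∑ aₙ ω(n)` and `∑ aₙ`
is a sum over multiples of `1`, `p` or `p q`; by multiplicativity of `g` the main terms cancel down
to at most `m X`, and the remainders contribute `O(m² y² X^(39/40))`. Hence
`a 1 ≪ X / m + y² X^(39/40)`, and Chebyshev's bound `π(y) ≫_δ y^(1-δ)` with `δ = 200 ε`, together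
with `g p ≥ 1/6`, gives `m ≫ X^(1/200 - ε)`.
-/

open Finset Real Filter Asymptotics

lemma primesProdBelow_ne_zero (z : ℝ) : primesProdBelow z ≠ 0 :=
  prod_ne_zero_iff.mpr fun _ hp => (mem_filter.mp hp).2.ne_zero

lemma Nat.Prime.dvd_primesProdBelow {p : ℕ} {z : ℝ} (hp : p.Prime) (hpz : (p : ℝ) < z) :
    p ∣ primesProdBelow z :=
  dvd_prod_of_mem _ (mem_filter.mpr ⟨mem_range.mpr (Nat.lt_ceil.mpr hpz), hp⟩)

theorem eventually_rpow_le_primeCounting_floor {δ : ℝ} (hδ : 0 < δ) :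
    ∀ᶠ x : ℝ in atTop, x ^ (1 - δ) ≤ Nat.primeCounting ⌊x⌋₊ := by
  have hmain : (fun x : ℝ => x ^ (1 - δ) * log x) =o[atTop] id := by
    refine ((isBigO_refl (fun x : ℝ => x ^ (1 - δ)) atTop).mul_isLittleO
      (isLittleO_log_rpow_atTop hδ)).congr' .rfl ?_
    filter_upwards [eventually_gt_atTop 0] with x hx
    rw [← rpow_add hx, sub_add_cancel, rpow_one, id]
  have hlog : (fun x : ℝ => log (x + 2)) =o[atTop] id :=
    (isLittleO_log_id_atTop.comp_tendsto
      (tendsto_atTop_add_const_right _ 2 tendsto_id)).trans_isBigO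
      ((isBigO_refl id atTop).add (isLittleO_const_id_atTop (2 : ℝ)).isBigO)
  -- Chebyshev: `π ⌊x⌋₊ ≥ ((x - 1) log 2 - log (x + 2)) / log x`, and the losses are `o(x)`.
  filter_upwards [(hmain.add ((isLittleO_const_id_atTop (log 2)).add hlog)).bound
    (log_pos one_lt_two), eventually_gt_atTop 1] with x hbound hx
  refine le_trans ?_ (Chebyshev.pi_ge' hx)
  rw [le_div_iff₀ (log_pos hx)]
  rw [Real.norm_eq_abs, id, Real.norm_of_nonneg (by linarith)] at hbound
  linarith [le_abs_self (x ^ (1 - δ) * log x + (log 2 + log (x + 2)))]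

lemma div_le_two_mul_rpow {X t κ δ : ℝ} (hX : 0 < X) (hδ : 0 ≤ δ)
    (ht : (X ^ κ / 2) ^ (1 - δ) ≤ t) : X / t ≤ 2 * X ^ (1 - κ * (1 - δ)) := by
  have h2 : (2 : ℝ) ^ (1 - δ) ≤ 2 := by
    simpa using rpow_le_rpow_of_exponent_le one_le_two (by linarith : 1 - δ ≤ 1)
  rw [div_rpow (by positivity) zero_le_two, ← rpow_mul hX.le] at ht
  have ht' : X ^ (κ * (1 - δ)) / 2 ≤ t :=
    le_trans (div_le_div_of_nonneg_left (by positivity) (by positivity) h2) ht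
  rw [div_le_iff₀ (lt_of_lt_of_le (by positivity) ht'), rpow_sub hX, rpow_one]
  calc X = 2 * (X / X ^ (κ * (1 - δ))) * (X ^ (κ * (1 - δ)) / 2) := by field_simp
    _ ≤ 2 * (X / X ^ (κ * (1 - δ))) * t := by gcongr

lemma six_mul_div_add_sq_mul_rpow_le {X t ε : ℝ} (hX : 1 ≤ X) (hε : 0 ≤ ε)
    (ht : (X ^ (1 / 200 : ℝ) / 2) ^ (1 - 200 * ε) ≤ t) :
    6 * X / t + 144 * (X ^ (1 / 200 : ℝ) / 2) ^ 2 * X ^ (39 / 40 : ℝ) ≤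
      156 * X ^ (199 / 200 + ε) := by
  have h1 : X / t ≤ 2 * X ^ (199 / 200 + ε) := by
    convert div_le_two_mul_rpow (by linarith) (by positivity) ht using 3
    ring
  have h2 : (X ^ (1 / 200 : ℝ) / 2) ^ 2 * X ^ (39 / 40 : ℝ) ≤ X ^ (199 / 200 + ε) := calc
    _ ≤ (X ^ (1 / 200 : ℝ)) ^ 2 * X ^ (39 / 40 : ℝ) := by
      gcongr
      linarith [rpow_nonneg (by linarith : 0 ≤ X) (1 / 200 : ℝ)]
    _ = X ^ ((1 : ℝ) / 200 * (2 : ℕ) + 39 / 40) := by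
      rw [← rpow_natCast, ← rpow_mul (by linarith), ← rpow_add (by linarith)]
    _ ≤ X ^ (199 / 200 + ε) := rpow_le_rpow_of_exponent_le hX (by norm_num; linarith)
  rw [mul_div_assoc]
  linarith

def sumMultiples (S : Finset ℕ) (a : ℕ → ℝ) (d : ℕ) : ℝ := ∑ n ∈ S with d ∣ n, a n

lemma tsum_ite_dvd_eq_sumMultiples {a : ℕ → ℝ} {P : ℕ} (hP : P ≠ 0)
    (ha : ∀ n, ¬n ∣ P → a n = 0) (d : ℕ) :
    (∑' n : ℕ, if 0 < n ∧ d ∣ n then a n else 0) = sumMultiples P.divisors a d := by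
  rw [tsum_eq_sum (s := P.divisors) fun n hn => by
      simp [ha n (mt (Nat.mem_divisors.mpr ⟨·, hP⟩) hn)],
    sumMultiples, sum_filter]
  exact sum_congr rfl fun n hn => by simp [Nat.pos_of_mem_divisors hn]

section Turan

variable {S T : Finset ℕ} {a : ℕ → ℝ}

lemma le_sumMultiples (ha : ∀ n ∈ S, 0 ≤ a n) {n d : ℕ} (hn : n ∈ S) (hd : d ∣ n) :
    a n ≤ sumMultiples S a d :=
  single_le_sum (fun k hk => ha k (mem_filter.mp hk).1) (mem_filter.mpr ⟨hn, hd⟩)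

lemma sumMultiples_one : sumMultiples S a 1 = ∑ n ∈ S, a n := by
  simp [sumMultiples]

lemma sum_mul_card_filter_dvd :
    ∑ n ∈ S, a n * #{p ∈ T | p ∣ n} = ∑ p ∈ T, sumMultiples S a p := by
  simp_rw [card_filter, Nat.cast_sum, mul_sum, sumMultiples, sum_filter]
  rw [sum_comm]
  refine sum_congr rfl fun p _ => sum_congr rfl fun n _ => ?_
  split_ifs <;> simp

lemma sum_mul_card_filter_dvd_sq :
    ∑ n ∈ S, a n * #{p ∈ T | p ∣ n} ^ 2 =
      ∑ p ∈ T, ∑ q ∈ T, sumMultiples S a (p.lcm q) := by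
  simp_rw [card_filter, Nat.cast_sum, sq, sum_mul_sum, mul_sum, sumMultiples, sum_filter,
    Nat.lcm_dvd_iff]
  rw [sum_comm]
  refine sum_congr rfl fun p _ => ?_
  rw [sum_comm]
  refine sum_congr rfl fun q _ => sum_congr rfl fun n _ => ?_
  split_ifs <;> simp_all

lemma sum_mul_card_filter_dvd_sub_sq (m : ℝ) :
    ∑ n ∈ S, a n * (#{p ∈ T | p ∣ n} - m) ^ 2 =
      ∑ p ∈ T, ∑ q ∈ T, sumMultiples S a (p.lcm q) - 2 * m * ∑ p ∈ T, sumMultiples S a p +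
        m ^ 2 * sumMultiples S a 1 := by
  rw [← sum_mul_card_filter_dvd_sq, ← sum_mul_card_filter_dvd, sumMultiples_one, mul_sum, mul_sum,
    ← sum_sub_distrib, ← sum_add_distrib]
  exact sum_congr rfl fun n _ => by ring

lemma sum_sum_lcm_eq (g : ℕ → ℝ) (hg : ∀ p ∈ T, ∀ q ∈ T, p ≠ q → g (p.lcm q) = g p * g q) :
    ∑ p ∈ T, ∑ q ∈ T, g (p.lcm q) = (∑ p ∈ T, g p) ^ 2 + ∑ p ∈ T, (g p - g p ^ 2) := by
  rw [sq, sum_mul, ← sum_add_distrib]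
  refine sum_congr rfl fun p hp => ?_
  rw [← add_sum_erase T _ hp, ← add_sum_erase T _ hp, Nat.lcm_self, mul_add,
    sum_congr rfl fun q hq => hg p hp q (mem_of_mem_erase hq) (ne_of_mem_erase hq).symm, mul_sum]
  ring

theorem turan_sieve {g R : ℕ → ℝ} {X : ℝ} (ha : ∀ n ∈ S, 0 ≤ a n) (h1S : 1 ∈ S) (h1T : 1 ∉ T)
    (hX : 0 ≤ X) (hm : 0 ≤ ∑ p ∈ T, g p)
    (hg : ∀ p ∈ T, ∀ q ∈ T, p ≠ q → g (p.lcm q) = g p * g q)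
    (hA1 : |sumMultiples S a 1 - X| ≤ R 1)
    (hA : ∀ p ∈ T, ∀ q ∈ T, |sumMultiples S a (p.lcm q) - g (p.lcm q) * X| ≤ R (p.lcm q)) :
    a 1 * (∑ p ∈ T, g p) ^ 2 ≤ (∑ p ∈ T, g p) * X +
      (∑ p ∈ T, ∑ q ∈ T, R (p.lcm q) + 2 * (∑ p ∈ T, g p) * ∑ p ∈ T, R p +
        (∑ p ∈ T, g p) ^ 2 * R 1) := by
  set m := ∑ p ∈ T, g p
  have hω1 : #{p ∈ T | p ∣ 1} = 0 := by
    simp only [Nat.dvd_one, card_eq_zero, filter_eq_empty_iff]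
    exact fun p hp h => h1T (h ▸ hp)
  have hvar : a 1 * m ^ 2 ≤ ∑ n ∈ S, a n * (#{p ∈ T | p ∣ n} - m) ^ 2 := by
    have := single_le_sum (f := fun n => a n * (#{p ∈ T | p ∣ n} - m) ^ 2)
      (fun n hn => mul_nonneg (ha n hn) (sq_nonneg _)) h1S
    rwa [hω1, Nat.cast_zero, zero_sub, neg_sq] at this
  have hA2 : ∑ p ∈ T, ∑ q ∈ T, sumMultiples S a (p.lcm q) ≤
      ∑ p ∈ T, ∑ q ∈ T, (g (p.lcm q) * X + R (p.lcm q)) :=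
    sum_le_sum fun p hp => sum_le_sum fun q hq => by linarith [(abs_le.mp (hA p hp q hq)).2]
  have hA1' : ∑ p ∈ T, (g p * X - R p) ≤ ∑ p ∈ T, sumMultiples S a p :=
    sum_le_sum fun p hp => by
      have := abs_le.mp (hA p hp p hp)
      rw [Nat.lcm_self] at this
      linarith [this.1]
  have hmain : ∑ p ∈ T, ∑ q ∈ T, g (p.lcm q) * X ≤ m ^ 2 * X + m * X := by
    simp_rw [← sum_mul]
    rw [sum_sum_lcm_eq g hg, sum_sub_distrib]
    have : 0 ≤ ∑ p ∈ T, g p ^ 2 := sum_nonneg fun p _ => sq_nonneg _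
    nlinarith
  rw [sum_sub_distrib, ← sum_mul] at hA1'
  simp_rw [sum_add_distrib] at hA2
  have h0 : sumMultiples S a 1 ≤ X + R 1 := by linarith [(abs_le.mp hA1).2]
  have h1 := mul_le_mul_of_nonneg_left hA1' (by positivity : 0 ≤ 2 * m)
  have h2 := mul_le_mul_of_nonneg_left h0 (sq_nonneg m)
  rw [sum_mul_card_filter_dvd_sub_sq] at hvar
  linarith

theorem turan_sieve_primes {g : ℕ → ℝ} {P : ℕ} {X Y E : ℝ}
    (ha : ∀ n ∈ S, 0 ≤ a n) (h1S : 1 ∈ S) (hT : T.Nonempty) (hTprime : ∀ p ∈ T, p.Prime)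
    (hTP : ∀ p ∈ T, p ∣ P) (hTY : ∀ p ∈ T, (p : ℝ) ≤ Y) (hX : 0 ≤ X) (hE : 0 ≤ E)
    (hg1 : g 1 = 1) (hgmul : ∀ d e, d ∣ P → e ∣ P → d.Coprime e → g (d * e) = g d * g e)
    (hg : ∀ p ∈ T, 1 / 6 ≤ g p ∧ g p ≤ 1 / 4)
    (hA : ∀ d, d ∣ P → |sumMultiples S a d - g d * X| ≤ d * g d * E) :
    a 1 ≤ 6 * X / #T + 144 * Y ^ 2 * E := by
  have hcop : ∀ p ∈ T, ∀ q ∈ T, p ≠ q → p.Coprime q := fun p hp q hq =>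
    (Nat.coprime_primes (hTprime p hp) (hTprime q hq)).mpr
  have hglcm : ∀ p ∈ T, ∀ q ∈ T, p ≠ q → g (p.lcm q) = g p * g q := fun p hp q hq hpq => by
    rw [(hcop p hp q hq hpq).lcm_eq_mul, hgmul p q (hTP p hp) (hTP q hq) (hcop p hp q hq hpq)]
  have hglcm_le : ∀ p ∈ T, ∀ q ∈ T, g (p.lcm q) ≤ 1 := fun p hp q hq => by
    rcases eq_or_ne p q with rfl | hpq
    · linarith [Nat.lcm_self p ▸ (hg p hp).2]
    · rw [hglcm p hp q hq hpq]
      nlinarith [hg p hp, hg q hq]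
  set m := ∑ p ∈ T, g p
  set Sp := ∑ p ∈ T, (p : ℝ)
  have hm6 : (#T : ℝ) / 6 ≤ m := by
    have := card_nsmul_le_sum T g _ fun p hp => (hg p hp).1
    rw [nsmul_eq_mul] at this
    linarith
  have hm0 : 0 < m := lt_of_lt_of_le (by positivity) hm6
  have hmSp : m ≤ Sp := sum_le_sum fun p hp => by
    linarith [(hg p hp).2, show (2 : ℝ) ≤ p from mod_cast (hTprime p hp).two_le]
  have hSpY : Sp ≤ #T * Y := by
    simpa only [nsmul_eq_mul] using sum_le_card_nsmul T (fun p => (p : ℝ)) Y hTY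
  have hturan : a 1 * m ^ 2 ≤ m * X + (∑ p ∈ T, ∑ q ∈ T, ((p.lcm q : ℕ) : ℝ) * E +
      2 * m * ∑ p ∈ T, (p : ℝ) * E + m ^ 2 * ((1 : ℕ) * E)) := turan_sieve (R := fun d => d * E)
    ha h1S (fun h => Nat.not_prime_one (hTprime 1 h)) hX hm0.le hglcm
    (by simpa [hg1] using hA 1 (one_dvd P))
    fun p hp q hq => (hA _ (Nat.lcm_dvd (hTP p hp) (hTP q hq))).trans
      (by gcongr; exact mul_le_of_le_one_right (Nat.cast_nonneg _) (hglcm_le p hp q hq))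
  have hlcm_le : ∑ p ∈ T, ∑ q ∈ T, ((p.lcm q : ℕ) : ℝ) * E ≤ Sp ^ 2 * E := by
    rw [sq, sum_mul_sum, sum_mul]
    refine sum_le_sum fun p hp => ?_
    rw [sum_mul]
    exact sum_le_sum fun q hq => by
      gcongr
      exact_mod_cast Nat.le_of_dvd (Nat.mul_pos (hTprime p hp).pos (hTprime q hq).pos)
        (Nat.lcm_dvd_mul p q)
  have hSpm : (Sp + m) ^ 2 ≤ 144 * m ^ 2 * Y ^ 2 := by
    have hY : 0 ≤ Y := le_trans (by positivity) (hTY _ hT.choose_spec)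
    have : Sp + m ≤ 12 * m * Y := by nlinarith
    nlinarith [pow_le_pow_left₀ (by positivity) this 2]
  have key : a 1 * m ^ 2 ≤ m * X + 144 * m ^ 2 * Y ^ 2 * E := by
    rw [← sum_mul, Nat.cast_one, one_mul] at hturan
    nlinarith [mul_le_mul_of_nonneg_right hSpm hE]
  calc a 1 = a 1 * m ^ 2 / m ^ 2 := by field_simp
    _ ≤ (m * X + 144 * m ^ 2 * Y ^ 2 * E) / m ^ 2 := by gcongr
    _ = X / m + 144 * Y ^ 2 * E := by field_simp
    _ ≤ 6 * X / #T + 144 * Y ^ 2 * E := by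
      rw [show 6 * X / #T = X / (#T / 6) by ring]
      gcongr

end Turan

theorem turan_sieve_primesProdBelow {z y X E : ℝ} {g a : ℕ → ℝ} (hy : 0 < y) (hyz : y < z)
    (hπ : 0 < Nat.primeCounting ⌊y⌋₊) (hX : 0 ≤ X) (hE : 0 ≤ E) (hg1 : g 1 = 1)
    (hgmul : ∀ d e : ℕ, d ∣ primesProdBelow z → e ∣ primesProdBelow z → Nat.Coprime d e →
      g (d * e) = g d * g e)
    (hg : ∀ p : ℕ, p.Prime → (p : ℝ) < z → 1 / 6 ≤ g p ∧ g p ≤ 1 / 4) (ha : ∀ n, 0 ≤ a n)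
    (hA : ∀ d, d ∣ primesProdBelow z →
      |sumMultiples (primesProdBelow z).divisors a d - g d * X| ≤ d * g d * E) :
    a 1 ≤ 6 * X / Nat.primeCounting ⌊y⌋₊ + 144 * y ^ 2 * E := by
  have hTy : ∀ p ∈ Nat.primesLE ⌊y⌋₊, p.Prime ∧ (p : ℝ) < z := fun p hp =>
    ⟨Nat.prime_of_mem_primesLE hp,
      ((Nat.le_floor_iff hy.le).mp (Nat.le_of_mem_primesLE hp)).trans_lt hyz⟩
  rw [← Nat.primesLE_card_eq_primeCounting] at hπ ⊢
  exact turan_sieve_primes (fun n _ => ha n)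
    (Nat.one_mem_divisors.mpr (primesProdBelow_ne_zero z)) (card_pos.mp hπ)
    (fun p hp => (hTy p hp).1) (fun p hp => (hTy p hp).1.dvd_primesProdBelow (hTy p hp).2)
    (fun p hp => (Nat.le_floor_iff hy.le).mp (Nat.le_of_mem_primesLE hp)) hX hE hg1 hgmul
    (fun p hp => hg p (hTy p hp).1 (hTy p hp).2) hA

/-- Let `X ≥ 2` and `z ≥ X^(1/200)` be real, `P = ∏_{p < z} p`.
Let `g : ℕ → ℝ` satisfy `g 1 = 1`, `g (d·e) = g d · g e` for coprime divisors `d, e` of `P`,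
and `1/6 ≤ g p ≤ 1/4` for every prime `p < z`. Let `(a_n)` be nonnegative reals supported on
divisors of `P`, and suppose that for every positive divisor `d` of `P`,
`|∑_{n ≡ 0 (mod d), n ≥ 1} a_n − g d · X| ≤ d · g d · X^(39/40)`.
Then for every `ε > 0` there is `C_ε > 0`, independent of `X, z, g, a`, with
`a 1 ≤ C_ε · X^(199/200 + ε)`. -/
theorem selberg_sieve_power_saving :
    ∀ ε : ℝ, 0 < ε → ∃ C : ℝ, 0 < C ∧
      ∀ (X z : ℝ) (g a : ℕ → ℝ), 2 ≤ X → X ^ ((1 : ℝ) / 200) ≤ z →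
        g 1 = 1 →
        (∀ d e : ℕ, d ∣ primesProdBelow z → e ∣ primesProdBelow z → Nat.Coprime d e →
          g (d * e) = g d * g e) →
        (∀ p : ℕ, p.Prime → (p : ℝ) < z → 1 / 6 ≤ g p ∧ g p ≤ 1 / 4) →
        (∀ n : ℕ, 0 ≤ a n) →
        (∀ n : ℕ, ¬n ∣ primesProdBelow z → a n = 0) →
        (∀ d : ℕ, d ∣ primesProdBelow z →
          |(∑' n : ℕ, if 0 < n ∧ d ∣ n then a n else 0) - g d * X| ≤
            (d : ℝ) * g d * X ^ ((39 : ℝ) / 40)) →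
        a 1 ≤ C * X ^ ((199 : ℝ) / 200 + ε) := by
  intro ε hε
  obtain ⟨B, hB⟩ := ((eventually_rpow_le_primeCounting_floor (by positivity : 0 < 200 * ε)).and
    (eventually_ge_atTop 1)).exists_forall_of_atTop
  have hB1 : 1 ≤ B := (hB B le_rfl).2
  refine ⟨2 * (2 * B) ^ 200 + 156, by positivity, ?_⟩
  intro X z g a hX hYz hg1 hgmul hg ha hsupp hA
  set Y := X ^ ((1 : ℝ) / 200)
  have hP := primesProdBelow_ne_zero z
  simp only [tsum_ite_dvd_eq_sumMultiples hP hsupp] at hA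
  have hXe : 1 ≤ X ^ ((199 : ℝ) / 200 + ε) := one_le_rpow (by linarith) (by positivity)
  rcases lt_or_ge (Y / 2) B with hYB | hYB
  · have hXB : X ≤ (2 * B) ^ 200 := by
      rw [← rpow_inv_natCast_pow (by linarith : 0 ≤ X) (n := 200) (by norm_num)]
      gcongr
      simpa [Y, one_div] using (by linarith : Y ≤ 2 * B)
    have hA1 := (abs_le.mp (hA 1 (one_dvd _))).2
    rw [hg1, Nat.cast_one, one_mul, one_mul] at hA1
    nlinarith [le_sumMultiples (fun n _ => ha n) (Nat.one_mem_divisors.mpr hP) (one_dvd 1),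
      rpow_le_self_of_one_le (by linarith : 1 ≤ X) (by norm_num : (39 : ℝ) / 40 ≤ 1)]
  have hcard := (hB _ hYB).1
  have hmain := turan_sieve_primesProdBelow (y := Y / 2) (by positivity) (by linarith)
    (by exact_mod_cast (by positivity : (0 : ℝ) < (Y / 2) ^ (1 - 200 * ε)).trans_le hcard)
    (by linarith) (by positivity) hg1 hgmul hg ha hA
  calc a 1 ≤ _ := hmain
    _ ≤ 156 * X ^ ((199 : ℝ) / 200 + ε) := six_mul_div_add_sq_mul_rpow_le (by linarith) hε.le hcard
    _ ≤ _ := by gcongr; linarith [(by positivity : (0 : ℝ) ≤ 2 * (2 * B) ^ 200)]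
end

section
/- Let X ≥ 2 be real, K, and for each ε > 0 constants K_ε > 0, be given. Let c : ℕ → ℝ be a function on squarefree positive integers with c_1 = 1, c_{de} = c_d·c_e for coprime squarefree d, e, 0 ≤ c_p < 1 for every prime p, and c_d ≤ K_ε·d^{−2+ε} for all squarefree d and all ε > 0. Let f be a nonnegative real-valued function on squarefree positive integers satisfying, for all squarefree d: (i) |f(d) − c_d·X| ≤ K·(d^2·X^{39/40} + X^{199/200}) and (ii) f(d) ≤ K_ε·X·d^{−2+ε} for all ε > 0. Then the series ∑_d μ(d)·f(d) over squarefree d converges absolutely, the product ∏_p (1 − c_p) over primes converges, and for every ε > 0 there is C_ε > 0 (depending only on ε, K and the K_ε) such that |∑_d μ(d)·f(d) − (∏_p (1 − c_p))·X| ≤ C_ε · X^{399/400 + ε}. -/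
open ArithmeticFunction
open scoped ArithmeticFunction.Moebius

/-!
Since `d ↦ μ(d) c_d` is multiplicative and absolutely summable, `∑_d μ(d) c_d` is the Euler
product `∏_p (1 - c_p)`, so the quantity to bound is `|∑_d μ(d) (f(d) - c_d X)|`. For `d ≤ T` each
term is at most `K (d² X^{39/40} + X^{199/200})`, about `T³ X^{39/40} + T X^{199/200}` in total.
For `d > T` the terms are at most `K_η X d^{-2+η/2}`, and Rankin's trick
`d^{-2+η/2} ≤ T^{-(1-η)} d^{-1-η/2}` bounds the tail by `X T^{-(1-η)}` times a convergent sum.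
The cutoff `T = X^{1/400}` makes every part `O(X^{399/400+η/400})`.
-/

open Finset

section SquarefreeMultiplicative

variable {c : ℕ → ℝ}

lemma nonneg_of_squarefree_of_map_mul (hc1 : c 1 = 1)
    (hmul : ∀ d e : ℕ, Squarefree d → Squarefree e → Nat.Coprime d e → c (d * e) = c d * c e)
    (hp : ∀ p : ℕ, p.Prime → 0 ≤ c p) {d : ℕ} (hd : Squarefree d) : 0 ≤ c d := by
  induction d using Nat.recOnPosPrimePosCoprime with
  | prime_pow p n hp' hn =>
    obtain rfl : n = 1 := ((Nat.squarefree_pow_iff hp'.ne_one hn.ne').1 hd).2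
    simpa using hp p hp'
  | zero => exact absurd hd not_squarefree_zero
  | one => exact hc1 ▸ zero_le_one
  | coprime a b _ _ hab ha hb =>
    obtain ⟨-, hsa, hsb⟩ := Nat.squarefree_mul_iff.1 hd
    rw [hmul a b hsa hsb hab]
    exact mul_nonneg (ha hsa) (hb hsb)

lemma moebius_mul_map_mul_of_coprime
    (hmul : ∀ d e : ℕ, Squarefree d → Squarefree e → Nat.Coprime d e → c (d * e) = c d * c e)
    {m n : ℕ} (hmn : m.Coprime n) :
    (μ (m * n) : ℝ) * c (m * n) = (μ m * c m) * (μ n * c n) := by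
  by_cases h : Squarefree (m * n)
  · obtain ⟨-, hm, hn⟩ := Nat.squarefree_mul_iff.1 h
    rw [isMultiplicative_moebius.map_mul_of_coprime hmn, hmul m n hm hn hmn]
    push_cast
    ring
  · have : ¬Squarefree m ∨ ¬Squarefree n := by
      rw [Nat.squarefree_mul_iff] at h
      tauto
    rcases this with hm | hn <;> simp [moebius_eq_zero_of_not_squarefree, *]

lemma tsum_moebius_mul_prime_pow (hc1 : c 1 = 1) {p : ℕ} (hp : p.Prime) :
    ∑' e : ℕ, (μ (p ^ e) : ℝ) * c (p ^ e) = 1 - c p := by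
  rw [tsum_eq_sum (s := range 2) fun e he => ?_, sum_range_succ, sum_range_one]
  · simp [moebius_apply_prime hp, hc1]
    ring
  · have he : 1 < e := by simpa using he
    rw [moebius_apply_prime_pow hp (by omega), if_neg (by omega)]
    simp

lemma hasProd_one_sub_of_summable_moebius_mul (hc1 : c 1 = 1)
    (hmul : ∀ d e : ℕ, Squarefree d → Squarefree e → Nat.Coprime d e → c (d * e) = c d * c e)
    (hsum : Summable fun d : ℕ => |(μ d : ℝ) * c d|) :
    HasProd (fun p : Nat.Primes => 1 - c p) (∑' d : ℕ, (μ d : ℝ) * c d) := by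
  have := EulerProduct.eulerProduct_hasProd (f := fun d => (μ d : ℝ) * c d) (by simp [hc1])
    (moebius_mul_map_mul_of_coprime hmul) (by simpa only [Real.norm_eq_abs] using hsum) (by simp)
  simpa only [fun p : Nat.Primes => tsum_moebius_mul_prime_pow hc1 p.2] using this

end SquarefreeMultiplicative

lemma abs_moebius_mul_le {g b : ℕ → ℝ} (hb : ∀ d, 0 ≤ b d)
    (hg : ∀ d, Squarefree d → |g d| ≤ b d) (d : ℕ) : |(μ d : ℝ) * g d| ≤ b d := by
  by_cases hd : Squarefree d
  · rw [abs_mul, ← Int.cast_abs, abs_moebius_eq_one_of_squarefree hd, Int.cast_one, one_mul]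
    exact hg d hd
  · simpa [moebius_eq_zero_of_not_squarefree hd] using hb d

lemma summable_abs_moebius_mul {g : ℕ → ℝ} {M s : ℝ} (hM : 0 ≤ M) (hs : s < -1)
    (hg : ∀ d, Squarefree d → |g d| ≤ M * (d : ℝ) ^ s) :
    Summable fun d : ℕ => |(μ d : ℝ) * g d| :=
  .of_nonneg_of_le (fun _ => abs_nonneg _) (abs_moebius_mul_le (fun _ => by positivity) hg)
    ((Real.summable_nat_rpow.2 hs).mul_left M)

lemma abs_tsum_le_sum_range_add_tsum {g a b : ℕ → ℝ} (k : ℕ) (hg : Summable g)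
    (ha : ∀ d < k, |g d| ≤ a d) (hb : ∀ d, k ≤ d → |g d| ≤ b d) (hb0 : ∀ d, 0 ≤ b d)
    (hbs : Summable b) :
    |∑' d, g d| ≤ ∑ d ∈ range k, a d + ∑' d, b d := by
  have head : |∑ d ∈ range k, g d| ≤ ∑ d ∈ range k, a d :=
    (abs_sum_le_sum_abs _ _).trans (sum_le_sum fun d hd => ha d (mem_range.1 hd))
  have tail : |∑' d, g (d + k)| ≤ ∑' d, b (d + k) :=
    tsum_of_norm_bounded (f := fun d => g (d + k)) ((summable_nat_add_iff k).2 hbs).hasSum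
      fun d => hb _ (Nat.le_add_left k d)
  have tail_le : ∑' d, b (d + k) ≤ ∑' d, b d := by
    rw [← hbs.sum_add_tsum_nat_add k]
    exact le_add_of_nonneg_left (sum_nonneg fun d _ => hb0 d)
  rw [← hg.sum_add_tsum_nat_add k]
  exact (abs_add_le _ _).trans (add_le_add head (tail.trans tail_le))

lemma abs_tsum_moebius_mul_le_of_cutoff {g : ℕ → ℝ} {K A B L T a b : ℝ} (hK : 0 ≤ K)
    (hA : 0 ≤ A) (hB : 0 ≤ B) (hL : 0 ≤ L) (hT : 1 ≤ T) (ha : a ≤ 0) (hb : b < -1)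
    (hsmall : ∀ d, Squarefree d → |g d| ≤ K * ((d : ℝ) ^ 2 * A + B))
    (hlarge : ∀ d, Squarefree d → |g d| ≤ L * (d : ℝ) ^ (a + b)) :
    |∑' d, (μ d : ℝ) * g d| ≤
      2 * T * K * (T ^ 2 * A + B) + L * T ^ a * ∑' d : ℕ, (d : ℝ) ^ b := by
  have hT0 : 0 ≤ T := by linarith
  have hsum : Summable fun d => (μ d : ℝ) * g d :=
    (summable_abs_moebius_mul hL (by linarith) hlarge).of_abs
  have head : ∑ d ∈ range (⌊T⌋₊ + 1), K * ((d : ℝ) ^ 2 * A + B) ≤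
      2 * T * K * (T ^ 2 * A + B) := by
    calc _ ≤ (range (⌊T⌋₊ + 1)).card • (K * (T ^ 2 * A + B)) := by
          refine sum_le_card_nsmul _ _ _ fun d hd => ?_
          have : (d : ℝ) ≤ T := (Nat.le_floor_iff hT0).1 (Nat.lt_succ_iff.1 (mem_range.1 hd))
          gcongr
      _ ≤ 2 * T * (K * (T ^ 2 * A + B)) := by
          rw [card_range, nsmul_eq_mul]
          gcongr
          push_cast
          linarith [Nat.floor_le hT0]
      _ = _ := by ring
  have rankin (d : ℕ) (hd : ⌊T⌋₊ + 1 ≤ d) : (d : ℝ) ^ (a + b) ≤ T ^ a * (d : ℝ) ^ b := by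
    have hTd : T ≤ d := (Nat.lt_of_floor_lt hd).le
    rw [Real.rpow_add (by linarith)]
    exact mul_le_mul_of_nonneg_right (Real.rpow_le_rpow_of_nonpos (by linarith) hTd ha)
      (by positivity)
  calc _ ≤ ∑ d ∈ range (⌊T⌋₊ + 1), K * ((d : ℝ) ^ 2 * A + B) +
        ∑' d : ℕ, L * T ^ a * (d : ℝ) ^ b :=
        abs_tsum_le_sum_range_add_tsum _ hsum
          (fun d _ => abs_moebius_mul_le (fun _ => by positivity) hsmall d)
          (fun d hd => (abs_moebius_mul_le (fun _ => by positivity) hlarge d).trans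
            (by rw [mul_assoc]; exact mul_le_mul_of_nonneg_left (rankin d hd) hL))
          (fun d => by positivity) ((Real.summable_nat_rpow.2 hb).mul_left _)
    _ ≤ _ := by
        rw [tsum_mul_left]
        exact add_le_add_left head _

lemma cutoff_head_le {X K : ℝ} (hX : 1 ≤ X) (hK : 0 ≤ K) :
    2 * X ^ (1 / 400 : ℝ) * K * ((X ^ (1 / 400 : ℝ)) ^ 2 * X ^ (39 / 40 : ℝ) +
      X ^ (199 / 200 : ℝ)) ≤ 4 * K * X ^ (399 / 400 : ℝ) := by
  have hX0 : 0 < X := by linarith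
  have h393 : X ^ (1 / 400 : ℝ) * ((X ^ (1 / 400 : ℝ)) ^ 2 * X ^ (39 / 40 : ℝ)) =
      X ^ (393 / 400 : ℝ) := by
    rw [← Real.rpow_natCast, ← Real.rpow_mul hX0.le, ← Real.rpow_add hX0,
      ← Real.rpow_add hX0]
    norm_num
  have h399 : X ^ (1 / 400 : ℝ) * X ^ (199 / 200 : ℝ) = X ^ (399 / 400 : ℝ) := by
    rw [← Real.rpow_add hX0]
    norm_num
  have hmono : X ^ (393 / 400 : ℝ) ≤ X ^ (399 / 400 : ℝ) :=
    Real.rpow_le_rpow_of_exponent_le hX (by norm_num)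
  calc _ = 2 * K * (X ^ (1 / 400 : ℝ) * ((X ^ (1 / 400 : ℝ)) ^ 2 * X ^ (39 / 40 : ℝ)) +
        X ^ (1 / 400 : ℝ) * X ^ (199 / 200 : ℝ)) := by ring
    _ ≤ 2 * K * (X ^ (399 / 400 : ℝ) + X ^ (399 / 400 : ℝ)) := by
        rw [h393, h399]
        gcongr
    _ = _ := by ring

lemma mul_cutoff_rpow_eq {X : ℝ} (hX : 0 < X) (η : ℝ) :
    X * (X ^ (1 / 400 : ℝ)) ^ (-(1 - η)) = X ^ (399 / 400 + η / 400 : ℝ) := by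
  rw [← Real.rpow_mul hX.le]
  nth_rw 1 [← Real.rpow_one X]
  rw [← Real.rpow_add hX]
  ring_nf

lemma abs_tsum_moebius_mul_sub_le {X K M η : ℝ} {c f : ℕ → ℝ} (hX : 1 ≤ X) (hK : 0 ≤ K)
    (hM : 0 ≤ M) (hη0 : 0 < η) (hη1 : η ≤ 1)
    (hc0 : ∀ d, Squarefree d → 0 ≤ c d) (hf0 : ∀ d, Squarefree d → 0 ≤ f d)
    (hcM : ∀ d, Squarefree d → c d ≤ M * (d : ℝ) ^ (-2 + η / 2))
    (hfM : ∀ d, Squarefree d → f d ≤ M * X * (d : ℝ) ^ (-2 + η / 2))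
    (herr : ∀ d, Squarefree d →
      |f d - c d * X| ≤ K * ((d : ℝ) ^ 2 * X ^ (39 / 40 : ℝ) + X ^ (199 / 200 : ℝ))) :
    |∑' d, (μ d : ℝ) * (f d - c d * X)| ≤
      (4 * K + M * ∑' d : ℕ, (d : ℝ) ^ (-1 - η / 2)) * X ^ (399 / 400 + η / 400 : ℝ) := by
  have hX0 : 0 < X := by linarith
  have hlarge (d : ℕ) (hd : Squarefree d) :
      |f d - c d * X| ≤ M * X * (d : ℝ) ^ (-(1 - η) + (-1 - η / 2)) := by
    rw [show -(1 - η) + (-1 - η / 2) = -2 + η / 2 by ring]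
    refine abs_sub_le_of_nonneg_of_le (hf0 d hd) (hfM d hd) (mul_nonneg (hc0 d hd) hX0.le) ?_
    nlinarith [hcM d hd]
  have hcut := abs_tsum_moebius_mul_le_of_cutoff (T := X ^ (1 / 400 : ℝ)) hK (by positivity)
    (by positivity) (by positivity) (Real.one_le_rpow hX (by norm_num)) (by linarith)
    (by linarith) herr hlarge
  have htail : M * X * (X ^ (1 / 400 : ℝ)) ^ (-(1 - η)) = M * X ^ (399 / 400 + η / 400 : ℝ) := by
    rw [mul_assoc, mul_cutoff_rpow_eq hX0]
  have hexp : X ^ (399 / 400 : ℝ) ≤ X ^ (399 / 400 + η / 400 : ℝ) :=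
    Real.rpow_le_rpow_of_exponent_le hX (by linarith)
  calc _ ≤ _ := hcut
    _ ≤ 4 * K * X ^ (399 / 400 : ℝ) +
        M * X ^ (399 / 400 + η / 400 : ℝ) * ∑' d : ℕ, (d : ℝ) ^ (-1 - η / 2) := by
        rw [htail]
        exact add_le_add_left (cutoff_head_le hX hK) _
    _ ≤ _ := by
        nlinarith [mul_le_mul_of_nonneg_left hexp hK]

theorem moebius_sum_sieve_general (K : ℝ) (Kf : ℝ → ℝ) :
    ∀ ε : ℝ, 0 < ε → ∃ C : ℝ, 0 < C ∧
      ∀ (X : ℝ) (c f : ℕ → ℝ), 2 ≤ X →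
        c 1 = 1 →
        (∀ d e : ℕ, Squarefree d → Squarefree e → Nat.Coprime d e →
          c (d * e) = c d * c e) →
        (∀ p : ℕ, p.Prime → 0 ≤ c p ∧ c p < 1) →
        (∀ ε' : ℝ, 0 < ε' → ∀ d : ℕ, Squarefree d → c d ≤ Kf ε' * (d : ℝ) ^ (-2 + ε')) →
        (∀ d : ℕ, Squarefree d → 0 ≤ f d) →
        (∀ d : ℕ, Squarefree d →
          |f d - c d * X| ≤ K * ((d : ℝ) ^ 2 * X ^ ((39 : ℝ) / 40) + X ^ ((199 : ℝ) / 200))) →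
        (∀ ε' : ℝ, 0 < ε' → ∀ d : ℕ, Squarefree d → f d ≤ Kf ε' * X * (d : ℝ) ^ (-2 + ε')) →
        (Summable fun d : ℕ => |(μ d : ℝ) * f d|) ∧
        (Multipliable fun p : Nat.Primes => 1 - c p) ∧
        |(∑' d : ℕ, (μ d : ℝ) * f d) - (∏' p : Nat.Primes, (1 - c p)) * X| ≤
          C * X ^ ((399 : ℝ) / 400 + ε) := by
  intro ε hε
  set η := min ε 1
  have hη : 0 < η := lt_min hε one_pos
  set M := |Kf (η / 2)|
  refine ⟨4 * |K| + M * ∑' d : ℕ, (d : ℝ) ^ (-1 - η / 2) + 1, by positivity, ?_⟩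
  intro X c f hX hc1 hcmul hcp hcbd hf0 hferr hfbd
  have hX1 : 1 ≤ X := by linarith
  have hc0 (d : ℕ) (hd : Squarefree d) : 0 ≤ c d :=
    nonneg_of_squarefree_of_map_mul hc1 hcmul (fun p hp => (hcp p hp).1) hd
  have hcM (d : ℕ) (hd : Squarefree d) : c d ≤ M * (d : ℝ) ^ (-2 + η / 2) :=
    (hcbd _ (half_pos hη) d hd).trans (by gcongr; exact le_abs_self _)
  have hfM (d : ℕ) (hd : Squarefree d) : f d ≤ M * X * (d : ℝ) ^ (-2 + η / 2) :=
    (hfbd _ (half_pos hη) d hd).trans (by gcongr; exact le_abs_self _)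
  have hs : -2 + η / 2 < -1 := by linarith [min_le_right ε 1]
  have hsum_f := summable_abs_moebius_mul (by positivity) hs
    fun d hd => (abs_of_nonneg (hf0 d hd)).trans_le (hfM d hd)
  have hsum_c := summable_abs_moebius_mul (by positivity) hs
    fun d hd => (abs_of_nonneg (hc0 d hd)).trans_le (hcM d hd)
  have hprod := hasProd_one_sub_of_summable_moebius_mul hc1 hcmul hsum_c
  refine ⟨hsum_f, hprod.multipliable, ?_⟩
  have hdiff : (∑' d, (μ d : ℝ) * f d) - (∑' d, (μ d : ℝ) * c d) * X =
      ∑' d, (μ d : ℝ) * (f d - c d * X) := by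
    rw [← tsum_mul_right, ← hsum_f.of_abs.tsum_sub (hsum_c.of_abs.mul_right X)]
    exact tsum_congr fun d => by ring
  rw [hprod.tprod_eq, hdiff]
  refine (abs_tsum_moebius_mul_sub_le hX1 (abs_nonneg K) (abs_nonneg _) hη (min_le_right _ _)
    hc0 hf0 hcM hfM fun d hd => (hferr d hd).trans (by gcongr; exact le_abs_self K)).trans ?_
  gcongr ?_ * X ^ ?_
  · exact le_add_of_nonneg_right zero_le_one
  · linarith [min_le_left ε 1]

/-- Abstract sieve from orders to maximal orders. Given `X ≥ 2`, a
constant `K`, and constants `K_ε > 0` for each `ε > 0`; `c : ℕ → ℝ` multiplicative on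
squarefree integers with `c 1 = 1`, `0 ≤ c p < 1` at primes, and `c d ≤ K_ε d^(−2+ε)`;
and `f` nonnegative on squarefree integers with `|f d − c d · X| ≤ K (d² X^(39/40) +
X^(199/200))` and `f d ≤ K_ε · X · d^(−2+ε)`. Then `∑_d μ(d) f(d)` converges absolutely,
`∏_p (1 − c p)` converges, and for every `ε > 0` there is `C_ε > 0` (depending only on
`ε, K` and the `K_ε`) with `|∑_d μ(d) f(d) − (∏_p (1 − c p)) · X| ≤ C_ε X^(399/400+ε)`. -/
theorem moebius_sum_sieve (K : ℝ) (Kf : ℝ → ℝ) (hKf : ∀ ε : ℝ, 0 < ε → 0 < Kf ε) :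
    ∀ ε : ℝ, 0 < ε → ∃ C : ℝ, 0 < C ∧
      ∀ (X : ℝ) (c f : ℕ → ℝ), 2 ≤ X →
        c 1 = 1 →
        (∀ d e : ℕ, Squarefree d → Squarefree e → Nat.Coprime d e →
          c (d * e) = c d * c e) →
        (∀ p : ℕ, p.Prime → 0 ≤ c p ∧ c p < 1) →
        (∀ ε' : ℝ, 0 < ε' → ∀ d : ℕ, Squarefree d → c d ≤ Kf ε' * (d : ℝ) ^ (-2 + ε')) →
        (∀ d : ℕ, Squarefree d → 0 ≤ f d) →
        (∀ d : ℕ, Squarefree d →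
          |f d - c d * X| ≤ K * ((d : ℝ) ^ 2 * X ^ ((39 : ℝ) / 40) + X ^ ((199 : ℝ) / 200))) →
        (∀ ε' : ℝ, 0 < ε' → ∀ d : ℕ, Squarefree d → f d ≤ Kf ε' * X * (d : ℝ) ^ (-2 + ε')) →
        (Summable fun d : ℕ => |(μ d : ℝ) * f d|) ∧
        (Multipliable fun p : Nat.Primes => 1 - c p) ∧
        |(∑' d : ℕ, (μ d : ℝ) * f d) - (∏' p : Nat.Primes, (1 - c p)) * X| ≤
          C * X ^ ((399 : ℝ) / 400 + ε) :=
  moebius_sum_sieve_general K Kf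
end
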